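/- Ceva's theorem: Let ABC be a triangle, and K, L, M points on lines BC, CA, AB respectively, none equal to a vertex. Write K = B + t_K(C − B), L = C + t_L(A − C), M = A + t_M(B − A) with t_K, t_L, t_M ∉ {0, 1}. Then lines AK, BL, CM are concurrent or mutually parallel if and only if (t_M/(1−t_M))·(t_K/(1−t_K))·(t_L/(1−t_L)) = 1. -/

import Mathlib

noncomputable section

abbrev Pt := EuclideanSpace ℝ (Fin 2)

/-- Ceva's theorem: the cevian lines `AK`, `BL`, `CM` are concurrent or mutually
parallel iff the product of the signed division ratios equals `1`. -/
theorem ceva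
    (A B C K L M : Pt)
    (hABC : AffineIndependent ℝ ![A, B, C])
    (tK tL tM : ℝ)
    (htK0 : tK ≠ 0) (htK1 : tK ≠ 1)
    (htL0 : tL ≠ 0) (htL1 : tL ≠ 1)
    (htM0 : tM ≠ 0) (htM1 : tM ≠ 1)
    (hK : K = B + tK • (C - B))
    (hL : L = C + tL • (A - C))
    (hM : M = A + tM • (B - A)) :
    ((∃ X : Pt, X ∈ affineSpan ℝ ({A, K} : Set Pt) ∧
        X ∈ affineSpan ℝ ({B, L} : Set Pt) ∧
        X ∈ affineSpan ℝ ({C, M} : Set Pt)) ∨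
      (AffineSubspace.Parallel (affineSpan ℝ ({A, K} : Set Pt))
          (affineSpan ℝ ({B, L} : Set Pt)) ∧
        AffineSubspace.Parallel (affineSpan ℝ ({B, L} : Set Pt))
          (affineSpan ℝ ({C, M} : Set Pt)))) ↔
    (tM / (1 - tM)) * (tK / (1 - tK)) * (tL / (1 - tL)) = 1 := by
  subst hK hL hM
  set u : Pt := B - A with hu
  set v : Pt := C - A with hv
  have h1a : (1 : ℝ) - tK ≠ 0 := sub_ne_zero.2 (Ne.symm htK1)
  have h1b : (1 : ℝ) - tL ≠ 0 := sub_ne_zero.2 (Ne.symm htL1)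
  have h1c : (1 : ℝ) - tM ≠ 0 := sub_ne_zero.2 (Ne.symm htM1)
  -- linear independence of u, v
  have hind : ∀ x y : ℝ, x • u + y • v = 0 → x = 0 ∧ y = 0 := by
    intro x y hxy
    have hxy' : -(x + y) • A + x • B + y • C = 0 := by
      have e : -(x + y) • A + x • B + y • C = x • (B - A) + y • (C - A) := by module
      rw [e, ← hu, ← hv]; exact hxy
    have h := affineIndependent_iff.1 hABC Finset.univ ![-(x + y), x, y]
      (by simp [Fin.sum_univ_three])
      (by
        simp only [Fin.sum_univ_three, Matrix.cons_val_zero, Matrix.cons_val_one,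
          Matrix.head_cons, Matrix.cons_val_two, Matrix.tail_cons]
        exact hxy')
    exact ⟨by simpa using h 1 (Finset.mem_univ 1), by simpa using h 2 (Finset.mem_univ 2)⟩
  have hcoef : ∀ p q x y : ℝ, (p • u + q • v = x • u + y • v) ↔ (p = x ∧ q = y) := by
    intro p q x y
    constructor
    · intro h
      have h0 : (p - x) • u + (q - y) • v = 0 := by
        have e : (p - x) • u + (q - y) • v = (p • u + q • v) - (x • u + y • v) := by module
        rw [e, h, sub_self]
      obtain ⟨e1, e2⟩ := hind _ _ h0
      exact ⟨by linarith, by linarith⟩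
    · rintro ⟨rfl, rfl⟩; rfl
  -- spanning
  have hli : LinearIndependent ℝ ![u, v] := LinearIndependent.pair_iff.2 hind
  have htop : Submodule.span ℝ (Set.range ![u, v]) = ⊤ :=
    hli.span_eq_top_of_card_eq_finrank (by simp)
  have hspan : ∀ w : Pt, ∃ x y : ℝ, x • u + y • v = w := by
    intro w
    have hr : Set.range ![u, v] = {u, v} := by
      simp [Matrix.range_cons, Matrix.range_empty, Set.pair_comm]
    have hw : w ∈ Submodule.span ℝ ({u, v} : Set Pt) := by
      rw [← hr, htop]; trivial
    exact Submodule.mem_span_pair.1 hw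
  -- membership in lines
  have memline : ∀ P Q X : Pt, X ∈ affineSpan ℝ ({P, Q} : Set Pt) ↔
      ∃ r : ℝ, r • (Q - P) = X - P := by
    intro P Q X
    have h := vadd_left_mem_affineSpan_pair (k := ℝ) (p₁ := P) (p₂ := Q) (v := X - P)
    simpa [vsub_eq_sub, vadd_eq_add, sub_add_cancel] using h
  have memline2 : ∀ (P Q X : Pt) (p q w z : ℝ), Q - P = p • u + q • v →
      X - P = w • u + z • v →
      (X ∈ affineSpan ℝ ({P, Q} : Set Pt) ↔ ∃ r : ℝ, r * p = w ∧ r * q = z) := by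
    intro P Q X p q w z hd hx
    rw [memline P Q X]
    constructor
    · rintro ⟨r, hr⟩
      refine ⟨r, (hcoef _ _ _ _).1 ?_⟩
      rw [← hx, ← hr, hd]; module
    · rintro ⟨r, hr1, hr2⟩
      exact ⟨r, by rw [hd, hx, ← hr1, ← hr2]; module⟩
  -- parallel
  have parhelp : ∀ P Q P' Q' : Pt,
      AffineSubspace.Parallel (affineSpan ℝ ({P, Q} : Set Pt))
        (affineSpan ℝ ({P', Q'} : Set Pt)) ↔
      ∃ z : ℝ, z ≠ 0 ∧ z • (P - Q) = P' - Q' := by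
    intro P Q P' Q'
    rw [AffineSubspace.affineSpan_pair_parallel_iff_vectorSpan_eq, vectorSpan_pair,
      vectorSpan_pair, Submodule.span_singleton_eq_span_singleton]
    constructor
    · rintro ⟨z, hz⟩
      exact ⟨(z : ℝ), z.ne_zero, by simpa [Units.smul_def, vsub_eq_sub] using hz⟩
    · rintro ⟨z, hz0, hz⟩
      exact ⟨Units.mk0 z hz0, by simpa [Units.smul_def, vsub_eq_sub] using hz⟩
  -- decompositions
  have hAKd : (B + tK • (C - B)) - A = (1 - tK) • u + tK • v := by rw [hu, hv]; module
  have hLBd : (C + tL • (A - C)) - B = (-1 : ℝ) • u + (1 - tL) • v := by rw [hu, hv]; module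
  have hMCd : (A + tM • (B - A)) - C = tM • u + (-1 : ℝ) • v := by rw [hu, hv]; module
  have hAKn : A - (B + tK • (C - B)) = (-(1 - tK)) • u + (-tK) • v := by rw [hu, hv]; module
  have hBLn : B - (C + tL • (A - C)) = (1 : ℝ) • u + (-(1 - tL)) • v := by rw [hu, hv]; module
  have hCMn : C - (A + tM • (B - A)) = (-tM) • u + (1 : ℝ) • v := by rw [hu, hv]; module
  have key : ((tM / (1 - tM)) * (tK / (1 - tK)) * (tL / (1 - tL)) = 1) ↔
      tM * tK * tL = (1 - tM) * (1 - tK) * (1 - tL) := by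
    rw [div_mul_div_comm, div_mul_div_comm,
      div_eq_one_iff_eq (mul_ne_zero (mul_ne_zero h1c h1a) h1b)]
  rw [key]
  constructor
  · rintro (⟨X, hX1, hX2, hX3⟩ | ⟨hpar1, hpar2⟩)
    · obtain ⟨x, y, hxy⟩ := hspan (X - A)
      have hxA : X - A = x • u + y • v := hxy.symm
      have hxB : X - B = (x - 1) • u + y • v := by
        have e : X - B = (X - A) - u := by rw [hu]; abel
        rw [e, hxA]; module
      have hxC : X - C = x • u + (y - 1) • v := by
        have e : X - C = (X - A) - v := by rw [hv]; abel
        rw [e, hxA]; module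
      obtain ⟨r, hr1, hr2⟩ := (memline2 A _ X _ _ _ _ hAKd hxA).1 hX1
      obtain ⟨s, hs1, hs2⟩ := (memline2 B _ X _ _ _ _ hLBd hxB).1 hX2
      obtain ⟨t, ht1, ht2⟩ := (memline2 C _ X _ _ _ _ hMCd hxC).1 hX3
      have hP : r * tK + r * (1 - tK) * (1 - tL) = 1 - tL := by
        linear_combination hr2 - hs2 + (1 - tL) * hr1 - (1 - tL) * hs1
      have hQ : r * (1 - tK) + r * tK * tM = tM := by
        linear_combination hr1 - ht1 + tM * hr2 - tM * ht2
      linear_combination ((1 - tK) + tK * tM) * hP - (tK + (1 - tK) * (1 - tL)) * hQ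
    · obtain ⟨z, hz0, hz⟩ := (parhelp _ _ _ _).1 hpar1
      obtain ⟨w, hw0, hw⟩ := (parhelp _ _ _ _).1 hpar2
      have hz' : (z * (-(1 - tK))) • u + (z * (-tK)) • v = (1 : ℝ) • u + (-(1 - tL)) • v := by
        rw [← hBLn, ← hz, hAKn]; module
      obtain ⟨hz1, hz2⟩ := (hcoef _ _ _ _).1 hz'
      have hw' : (w * 1) • u + (w * (-(1 - tL))) • v = (-tM) • u + (1 : ℝ) • v := by
        rw [← hCMn, ← hw, hBLn]; module
      obtain ⟨hw1, hw2⟩ := (hcoef _ _ _ _).1 hw'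
      have hD : tK + (1 - tK) * (1 - tL) = 0 := by
        linear_combination (-tK) * hz1 + (1 - tK) * hz2
      have hD' : tM * (1 - tL) = 1 := by
        linear_combination (1 - tL) * hw1 + hw2
      linear_combination (-tK) * hD' - (1 - tM) * hD
  · intro h
    rcases eq_or_ne (tK + (1 - tK) * (1 - tL)) 0 with hD | hD
    · -- parallel case
      right
      have haD' : tK * (tM * (1 - tL) - 1) = 0 := by
        linear_combination (-1 : ℝ) * h - (1 - tM) * hD
      have hD' : tM * (1 - tL) = 1 := by
        rcases mul_eq_zero.1 haD' with h' | h'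
        · exact absurd h' htK0
        · linarith
      constructor
      · rw [parhelp]
        refine ⟨(1 - tL) / tK, div_ne_zero h1b htK0, ?_⟩
        have e : ((1 - tL) / tK) • (A - (B + tK • (C - B))) =
            (((1 - tL) / tK) * (-(1 - tK))) • u + (((1 - tL) / tK) * (-tK)) • v := by
          rw [hAKn]; module
        rw [e, hBLn]
        exact (hcoef _ _ _ _).2 ⟨by field_simp; linear_combination -hD,
          by field_simp⟩
      · rw [parhelp]
        refine ⟨-tM, neg_ne_zero.2 htM0, ?_⟩
        have e : (-tM) • (B - (C + tL • (A - C))) =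
            ((-tM) * 1) • u + ((-tM) * (-(1 - tL))) • v := by
          rw [hBLn]; module
        rw [e, hCMn]
        exact (hcoef _ _ _ _).2 ⟨by ring, by linear_combination hD'⟩
    · -- concurrent case
      left
      refine ⟨A + (((1 - tK) * (1 - tL) / (tK + (1 - tK) * (1 - tL))) • u +
        (tK * (1 - tL) / (tK + (1 - tK) * (1 - tL))) • v), ?_, ?_, ?_⟩
      · rw [memline2 A _ _ _ _ ((1 - tK) * (1 - tL) / (tK + (1 - tK) * (1 - tL)))
          (tK * (1 - tL) / (tK + (1 - tK) * (1 - tL))) hAKd (by abel)]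
        refine ⟨(1 - tL) / (tK + (1 - tK) * (1 - tL)), ?_, ?_⟩
        · rw [div_mul_eq_mul_div]; ring_nf
        · rw [div_mul_eq_mul_div]; ring_nf
      · rw [memline2 B _ _ _ _ ((1 - tK) * (1 - tL) / (tK + (1 - tK) * (1 - tL)) - 1)
          (tK * (1 - tL) / (tK + (1 - tK) * (1 - tL))) hLBd (by rw [hu]; module)]
        refine ⟨tK / (tK + (1 - tK) * (1 - tL)), ?_, ?_⟩
        · field_simp; ring
        · rw [div_mul_eq_mul_div]
      · rw [memline2 C _ _ _ _ ((1 - tK) * (1 - tL) / (tK + (1 - tK) * (1 - tL)))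
          (tK * (1 - tL) / (tK + (1 - tK) * (1 - tL)) - 1) hMCd (by rw [hv]; module)]
        refine ⟨((tK + (1 - tK) * (1 - tL)) - tK * (1 - tL)) / (tK + (1 - tK) * (1 - tL)),
          ?_, ?_⟩
        · rw [div_mul_eq_mul_div, div_eq_div_iff hD hD]
          linear_combination (tK + (1 - tK) * (1 - tL)) * h
        · field_simp; ring
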